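/- arXiv:1207.4381 — 3 statements merged into one kernel-verified Lean document; each statement's English description precedes it below -/
import Mathlib

section
/- If M is a Borel measure on ℝ^d with M({0}) = 0 and ∫ (|x|² ∧ |x|^β) dM(x) < ∞ for some β ∈ [0,2], then its β-inversion M^β, defined by M^β({0}) = 0 and M^β(A) = ∫ 1_A(x/|x|²) |x|^(2+β) dM(x) for Borel sets A, also satisfies M^β({0}) = 0 and ∫ (|x|² ∧ |x|^β) dM^β(x) < ∞. -/
open MeasureTheory ENNReal Filter Topology Set

noncomputable section

abbrev Rd (d : ℕ) := EuclideanSpace ℝ (Fin d)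

/-- The spherical inversion map `x ↦ x / |x|²` (sending `0` to `0`). -/
def sphInv {d : ℕ} (x : Rd d) : Rd d := (‖x‖ ^ 2)⁻¹ • x

/-- The β-inversion of a measure `M`:
`M^β(A) = ∫ 1_A(x/|x|²) |x|^{2+β} M(dx)`. -/
def betaInv {d : ℕ} (β : ℝ) (M : Measure (Rd d)) : Measure (Rd d) :=
  Measure.map sphInv (M.withDensity fun x => ENNReal.ofReal (‖x‖ ^ (2 + β)))

/-- `M ∈ 𝔐^β`: `M({0}) = 0` and `∫ (|x|² ∧ |x|^β) M(dx) < ∞`. -/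
def MemM {d : ℕ} (β : ℝ) (M : Measure (Rd d)) : Prop :=
  M {0} = 0 ∧ ∫⁻ x, ENNReal.ofReal (min (‖x‖ ^ (2 : ℝ)) (‖x‖ ^ β)) ∂M < ⊤

theorem Real.rpow_add_mul_min_inv_rpow {t : ℝ} (ht : 0 < t) (a b : ℝ) :
    t ^ (a + b) * min (t⁻¹ ^ a) (t⁻¹ ^ b) = min (t ^ b) (t ^ a) := by
  rw [Real.inv_rpow ht.le, Real.inv_rpow ht.le, ← Real.rpow_neg ht.le, ← Real.rpow_neg ht.le,
    mul_min_of_nonneg _ _ (by positivity), ← Real.rpow_add ht, ← Real.rpow_add ht]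
  congr 2 <;> ring

section

variable {d : ℕ}

@[fun_prop]
theorem measurable_sphInv : Measurable (sphInv (d := d)) := by
  unfold sphInv
  fun_prop

theorem sphInv_eq_zero_iff {x : Rd d} : sphInv x = 0 ↔ x = 0 := by
  simp [sphInv, smul_eq_zero]

theorem norm_sphInv (x : Rd d) : ‖sphInv x‖ = ‖x‖⁻¹ := by
  rw [sphInv, norm_smul, norm_inv, norm_pow, norm_norm]
  rcases eq_or_ne ‖x‖ 0 with hx | hx
  · simp [hx]
  · field_simp

theorem betaInv_apply (β : ℝ) (M : Measure (Rd d)) {A : Set (Rd d)} (hA : MeasurableSet A) :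
    betaInv β M A
      = ∫⁻ x, A.indicator (fun _ => (1 : ℝ≥0∞)) (sphInv x) * ENNReal.ofReal (‖x‖ ^ (2 + β)) ∂M := by
  rw [betaInv, Measure.map_apply measurable_sphInv hA, withDensity_apply _ (measurable_sphInv hA),
    ← lintegral_indicator (measurable_sphInv hA)]
  congr 1 with x
  by_cases hx : sphInv x ∈ A <;> simp [indicator, hx]

theorem betaInv_singleton_zero (β : ℝ) {M : Measure (Rd d)} (hM : M {0} = 0) :
    betaInv β M {0} = 0 := by
  have hpre : sphInv ⁻¹' ({0} : Set (Rd d)) = {0} := Set.ext fun _ => sphInv_eq_zero_iff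
  rw [betaInv, Measure.map_apply measurable_sphInv (measurableSet_singleton 0), hpre,
    withDensity_apply _ (measurableSet_singleton 0), Measure.restrict_eq_zero.mpr hM,
    lintegral_zero_measure]

theorem lintegral_betaInv (β : ℝ) (M : Measure (Rd d)) {f : Rd d → ℝ≥0∞} (hf : Measurable f) :
    ∫⁻ y, f y ∂betaInv β M = ∫⁻ x, ENNReal.ofReal (‖x‖ ^ (2 + β)) * f (sphInv x) ∂M := by
  rw [betaInv, lintegral_map hf measurable_sphInv,
    lintegral_withDensity_eq_lintegral_mul _ (by fun_prop) (by fun_prop)]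
  rfl

theorem MemM.betaInv {β : ℝ} {M : Measure (Rd d)} (hM : MemM β M) : MemM β (betaInv β M) := by
  refine ⟨betaInv_singleton_zero β hM.1, ?_⟩
  rw [lintegral_betaInv β M (by fun_prop)]
  refine lt_of_eq_of_lt (lintegral_congr_ae ?_) hM.2
  have hM0 : ∀ᵐ x ∂M, x ≠ 0 := measure_eq_zero_iff_ae_notMem.mp hM.1
  filter_upwards [hM0] with x hx
  -- `|x / |x|²| = |x|⁻¹`, so the weight `|x|^(2+β)` swaps the two branches of the min
  rw [norm_sphInv, ← ofReal_mul (by positivity),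
    Real.rpow_add_mul_min_inv_rpow (norm_pos_iff.mpr hx), min_comm]

end

theorem stmt0_general {d : ℕ} (β : ℝ)
    (M : Measure (Rd d)) (hM : MemM β M) :
    (∀ A : Set (Rd d), MeasurableSet A →
        betaInv β M A
          = ∫⁻ x, A.indicator (fun _ => (1 : ℝ≥0∞)) (sphInv x)
              * ENNReal.ofReal (‖x‖ ^ (2 + β)) ∂M) ∧
      MemM β (betaInv β M) :=
  ⟨fun _ hA => betaInv_apply β M hA, hM.betaInv⟩

theorem stmt0 {d : ℕ} (β : ℝ) (hβ : β ∈ Set.Icc (0 : ℝ) 2)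
    (M : Measure (Rd d)) (hM : MemM β M) :
    (∀ A : Set (Rd d), MeasurableSet A →
        betaInv β M A
          = ∫⁻ x, A.indicator (fun _ => (1 : ℝ≥0∞)) (sphInv x)
              * ENNReal.ofReal (‖x‖ ^ (2 + β)) ∂M) ∧
      MemM β (betaInv β M) :=
  stmt0_general β M hM
end
end

section
/- Fix p > 0, α ∈ (-∞,2)\{0}, γ = max(α,0), and let R be a Borel measure on ℝ^d with R({0}) = 0 and ∫(|x|² ∧ |x|^γ) R(dx) < ∞. Define M(A) = ∫_{ℝ^d} ∫_0^∞ 1_A(tx) t^{-1-α} e^{-t^p} dt R(dx). Then M is a Lévy measure, i.e., M({0}) = 0 and ∫(|x|² ∧ 1) M(dx) < ∞. -/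
open MeasureTheory ENNReal Filter Topology Set

noncomputable section

/-- The value `∫_{ℝ^d} ∫_0^∞ 1_A(t x) t^{-1-α} e^{-t^p} dt R(dx)` defining the Lévy
measure of a `p`-tempered `α`-stable distribution with Rosiński measure `R`. -/
def temperedVal {d : ℕ} (p α : ℝ) (R : Measure (Rd d)) (A : Set (Rd d)) : ℝ≥0∞ :=
  ∫⁻ x, (∫⁻ t in Set.Ioi (0 : ℝ),
    A.indicator (fun _ => (1 : ℝ≥0∞)) (t • x)
      * ENNReal.ofReal (t ^ (-1 - α) * Real.exp (-(t ^ p))) ∂volume) ∂ R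

/-!
Write `ρ(dt) = t^{-1-α} e^{-t^p} dt` on `(0, ∞)`. Then `M` is the image of `R ⊗ ρ` under
`(x, t) ↦ t x`, so `M {0} = 0` because `R {0} = ρ {0} = 0`, and
`∫ (|y|² ∧ 1) M(dy) = ∫∫ (t²|x|² ∧ 1) ρ(dt) R(dx)`. The inner integral is at most
`|x|² ∫ t^{1-α} e^{-t^p} dt`, and also at most a constant times `|x|^γ`: for `α < 0` because `ρ`
is finite, for `α > 0` because after dropping `e^{-t^p}` the substitution `s = t |x|` turns it
into `|x|^α ∫ (s² ∧ 1) s^{-1-α} ds`. Both constants are finite as `α < 2`.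
-/

namespace TemperedStable

variable {p α : ℝ}

lemma le_add_mul_min {X A B a b : ℝ≥0∞} (ha : X ≤ A * a) (hb : X ≤ B * b) :
    X ≤ (A + B) * min a b := by
  rcases le_total a b with h | h
  · rw [min_eq_left h]
    exact ha.trans (mul_le_mul_left le_self_add _)
  · rw [min_eq_right h]
    exact hb.trans (mul_le_mul_left le_add_self _)

lemma lintegral_Ioi_comp_const_mul {r : ℝ} (hr : 0 < r) (g : ℝ → ℝ≥0∞) :
    ∫⁻ t in Ioi 0, ENNReal.ofReal r * g (r * t) = ∫⁻ s in Ioi 0, g s := by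
  have h := lintegral_image_eq_lintegral_abs_deriv_mul measurableSet_Ioi
    (fun t _ => ((hasDerivAt_id' t).const_mul r).hasDerivWithinAt)
    (mul_right_injective₀ hr.ne').injOn g (s := Ioi (0 : ℝ))
  rw [image_mul_left_Ioi hr, mul_zero] at h
  simpa [abs_of_pos hr] using h.symm

lemma setLIntegral_min_sq_one_mul_rpow_lt_top (hα0 : 0 < α) (hα : α < 2) :
    ∫⁻ s in Ioi 0, ENNReal.ofReal (min (s ^ (2 : ℝ)) 1 * s ^ (-1 - α)) < ∞ := by
  rw [← Ioc_union_Ioi_eq_Ioi zero_le_one,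
    lintegral_union measurableSet_Ioi (Ioc_disjoint_Ioi le_rfl)]
  refine add_lt_top.2 ⟨?_, ?_⟩
  · refine lt_of_le_of_lt ?_ (intervalIntegral.intervalIntegrable_rpow' (r := 1 - α) (a := 0)
      (b := 1) (by linarith)).1.setLIntegral_lt_top
    refine setLIntegral_mono' measurableSet_Ioc fun s hs => ofReal_le_ofReal ?_
    calc min (s ^ (2 : ℝ)) 1 * s ^ (-1 - α) ≤ s ^ (2 : ℝ) * s ^ (-1 - α) :=
          mul_le_mul_of_nonneg_right (min_le_left _ _) (Real.rpow_nonneg hs.1.le _)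
      _ = s ^ (1 - α) := by rw [← Real.rpow_add hs.1]; ring_nf
  · refine lt_of_le_of_lt ?_
      (integrableOn_Ioi_rpow_of_lt (a := -1 - α) (by linarith) zero_lt_one).setLIntegral_lt_top
    refine setLIntegral_mono' measurableSet_Ioi fun s (hs : (1 : ℝ) < s) => ofReal_le_ofReal ?_
    calc min (s ^ (2 : ℝ)) 1 * s ^ (-1 - α) ≤ 1 * s ^ (-1 - α) :=
          mul_le_mul_of_nonneg_right (min_le_right _ _) (Real.rpow_nonneg (by linarith) _)
      _ = s ^ (-1 - α) := one_mul _

section ProductRepresentation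

variable {E : Type*} [NormedAddCommGroup E] [NormedSpace ℝ E] [MeasurableSpace E] [BorelSpace E]

lemma map_smul_prod_singleton_zero {μ : Measure E} {ν : Measure ℝ} [SFinite ν]
    (hμ : μ {0} = 0) (hν : ν {0} = 0) :
    (μ.prod ν).map (fun z => z.2 • z.1) {0} = 0 := by
  have hpre : (fun z : E × ℝ => z.2 • z.1) ⁻¹' {0} = {0} ×ˢ univ ∪ univ ×ˢ {0} := by
    ext z
    simp [or_comm]
  rw [Measure.map_apply (by fun_prop) (measurableSet_singleton 0), hpre]
  exact measure_union_null (by simp [Measure.prod_prod, hμ]) (by simp [Measure.prod_prod, hν])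

lemma lintegral_map_smul_prod (μ : Measure E) (ν : Measure ℝ) [SFinite ν] {f : E → ℝ≥0∞}
    (hf : Measurable f) :
    ∫⁻ y, f y ∂(μ.prod ν).map (fun z => z.2 • z.1) = ∫⁻ x, ∫⁻ t, f (t • x) ∂ν ∂μ := by
  rw [lintegral_map hf (by fun_prop), lintegral_prod _ (by fun_prop)]

end ProductRepresentation

def radialMeasure (p α : ℝ) : Measure ℝ :=
  (volume.restrict (Ioi 0)).withDensity fun t => ENNReal.ofReal (t ^ (-1 - α) * Real.exp (-t ^ p))

instance : SFinite (radialMeasure p α) := by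
  unfold radialMeasure
  infer_instance

lemma radialMeasure_singleton_zero : radialMeasure p α {0} = 0 := by
  unfold radialMeasure
  exact measure_singleton 0

lemma radialMeasure_univ_lt_top (hp : 0 < p) (hα : α < 0) : radialMeasure p α univ < ∞ := by
  rw [radialMeasure, withDensity_apply _ MeasurableSet.univ, Measure.restrict_univ]
  exact (integrableOn_rpow_mul_exp_neg_rpow (by linarith) hp).setLIntegral_lt_top

lemma lintegral_radialMeasure {f : ℝ → ℝ≥0∞} (hf : Measurable f) :
    ∫⁻ t, f t ∂radialMeasure p α
      = ∫⁻ t in Ioi 0, ENNReal.ofReal (t ^ (-1 - α) * Real.exp (-t ^ p)) * f t :=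
  lintegral_withDensity_eq_lintegral_mul _ (by fun_prop) hf

section RadialBounds

variable {E : Type*} [NormedAddCommGroup E] [NormedSpace ℝ E]

lemma measurable_min_norm_smul_sq (x : E) :
    Measurable fun t : ℝ => ENNReal.ofReal (min (‖t • x‖ ^ (2 : ℝ)) 1) :=
  (Continuous.measurable (by fun_prop (disch := norm_num))).ennreal_ofReal

lemma lintegral_radialMeasure_le_sq (x : E) :
    ∫⁻ t, ENNReal.ofReal (min (‖t • x‖ ^ (2 : ℝ)) 1) ∂radialMeasure p α
      ≤ (∫⁻ t in Ioi 0, ENNReal.ofReal (t ^ (1 - α) * Real.exp (-t ^ p)))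
        * ENNReal.ofReal (‖x‖ ^ (2 : ℝ)) := by
  rw [lintegral_radialMeasure (measurable_min_norm_smul_sq x),
    ← lintegral_mul_const' _ _ ofReal_ne_top]
  refine setLIntegral_mono' measurableSet_Ioi fun t (ht : 0 < t) => ?_
  rw [← ofReal_mul (by positivity), ← ofReal_mul (by positivity)]
  refine ofReal_le_ofReal ?_
  calc t ^ (-1 - α) * Real.exp (-t ^ p) * min (‖t • x‖ ^ (2 : ℝ)) 1
      ≤ t ^ (-1 - α) * Real.exp (-t ^ p) * (t ^ (2 : ℝ) * ‖x‖ ^ (2 : ℝ)) := by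
        rw [norm_smul, Real.norm_of_nonneg ht.le, Real.mul_rpow ht.le (norm_nonneg x)]
        gcongr
        exact min_le_left _ _
    _ = t ^ (1 - α) * Real.exp (-t ^ p) * ‖x‖ ^ (2 : ℝ) := by
        rw [show 1 - α = -1 - α + 2 by ring, Real.rpow_add ht]
        ring

lemma lintegral_radialMeasure_le_univ (x : E) :
    ∫⁻ t, ENNReal.ofReal (min (‖t • x‖ ^ (2 : ℝ)) 1) ∂radialMeasure p α
      ≤ radialMeasure p α univ :=
  calc _ ≤ ∫⁻ _, 1 ∂radialMeasure p α :=
        lintegral_mono fun _ => ofReal_le_one.2 (min_le_right _ _)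
    _ = _ := lintegral_one

lemma lintegral_radialMeasure_le_rpow (x : E) :
    ∫⁻ t, ENNReal.ofReal (min (‖t • x‖ ^ (2 : ℝ)) 1) ∂radialMeasure p α
      ≤ (∫⁻ s in Ioi 0, ENNReal.ofReal (min (s ^ (2 : ℝ)) 1 * s ^ (-1 - α)))
        * ENNReal.ofReal (‖x‖ ^ α) := by
  rcases (norm_nonneg x).eq_or_lt with hx | hx
  · simp [norm_smul, ← hx]
  set r := ‖x‖
  rw [lintegral_radialMeasure (measurable_min_norm_smul_sq x),
    ← lintegral_Ioi_comp_const_mul hx fun s => ENNReal.ofReal (min (s ^ (2 : ℝ)) 1 * s ^ (-1 - α)),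
    ← lintegral_mul_const' _ _ ofReal_ne_top]
  refine setLIntegral_mono' measurableSet_Ioi fun t (ht : 0 < t) => ?_
  have hscale : r * r ^ (-1 - α) * r ^ α = 1 := by
    rw [mul_assoc, ← Real.rpow_add hx, show -1 - α + α = -1 by ring, Real.rpow_neg_one,
      mul_inv_cancel₀ hx.ne']
  rw [← ofReal_mul (by positivity), ← ofReal_mul (by positivity), ← ofReal_mul (by positivity)]
  refine ofReal_le_ofReal ?_
  calc t ^ (-1 - α) * Real.exp (-t ^ p) * min (‖t • x‖ ^ (2 : ℝ)) 1
      ≤ t ^ (-1 - α) * 1 * min ((r * t) ^ (2 : ℝ)) 1 := by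
        rw [norm_smul, Real.norm_of_nonneg ht.le, mul_comm t]
        gcongr
        exact Real.exp_le_one_iff.2 (neg_nonpos.2 (by positivity))
    _ = r * (min ((r * t) ^ (2 : ℝ)) 1 * (r * t) ^ (-1 - α)) * r ^ α := by
        rw [Real.mul_rpow (z := -1 - α) hx.le ht.le]
        linear_combination (-(t ^ (-1 - α) * min ((r * t) ^ (2 : ℝ)) 1)) * hscale

lemma exists_lintegral_radialMeasure_le (hp : 0 < p) (hα : α < 2) (hα0 : α ≠ 0) :
    ∃ C < ∞, ∀ x : E, ∫⁻ t, ENNReal.ofReal (min (‖t • x‖ ^ (2 : ℝ)) 1) ∂radialMeasure p α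
      ≤ C * ENNReal.ofReal (min (‖x‖ ^ (2 : ℝ)) (‖x‖ ^ max α 0)) := by
  have hsq : ∫⁻ t in Ioi 0, ENNReal.ofReal (t ^ (1 - α) * Real.exp (-t ^ p)) < ∞ :=
    (integrableOn_rpow_mul_exp_neg_rpow (by linarith) hp).setLIntegral_lt_top
  obtain ⟨B, hB, hBx⟩ : ∃ B < ∞, ∀ x : E,
      ∫⁻ t, ENNReal.ofReal (min (‖t • x‖ ^ (2 : ℝ)) 1) ∂radialMeasure p α
        ≤ B * ENNReal.ofReal (‖x‖ ^ max α 0) := by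
    rcases hα0.lt_or_gt with hneg | hpos
    · refine ⟨_, radialMeasure_univ_lt_top hp hneg, fun x => ?_⟩
      rw [max_eq_right hneg.le, Real.rpow_zero, ofReal_one, mul_one]
      exact lintegral_radialMeasure_le_univ x
    · refine ⟨_, setLIntegral_min_sq_one_mul_rpow_lt_top hpos hα, fun x => ?_⟩
      rw [max_eq_left hpos.le]
      exact lintegral_radialMeasure_le_rpow x
  refine ⟨_, add_lt_top.2 ⟨hsq, hB⟩, fun x => ?_⟩
  rw [ofReal_min]
  exact le_add_mul_min (lintegral_radialMeasure_le_sq x) (hBx x)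

end RadialBounds

lemma temperedVal_eq_map_smul_prod {d : ℕ} (R : Measure (Rd d)) {A : Set (Rd d)}
    (hA : MeasurableSet A) :
    temperedVal p α R A = (R.prod (radialMeasure p α)).map (fun z => z.2 • z.1) A := by
  rw [← lintegral_indicator_one hA, lintegral_map_smul_prod _ _ (measurable_one.indicator hA)]
  refine lintegral_congr fun x => ?_
  rw [lintegral_radialMeasure (f := fun t => A.indicator 1 (t • x))
    ((measurable_one.indicator hA).comp (measurable_id.smul_const x))]
  simp_rw [mul_comm]
  rfl

end TemperedStable

open TemperedStable in
theorem stmt13 {d : ℕ} (p α : ℝ) (hp : 0 < p) (hα : α < 2) (hα0 : α ≠ 0)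
    (R : Measure (Rd d)) (hR0 : R {0} = 0)
    (hR : ∫⁻ x, ENNReal.ofReal (min (‖x‖ ^ (2 : ℝ)) (‖x‖ ^ (max α 0))) ∂ R < ⊤)
    (M : Measure (Rd d))
    (hM : ∀ A : Set (Rd d), MeasurableSet A → M A = temperedVal p α R A) :
    M {0} = 0 ∧ ∫⁻ x, ENNReal.ofReal (min (‖x‖ ^ (2 : ℝ)) 1) ∂M < ⊤ := by
  have hM' : M = (R.prod (radialMeasure p α)).map fun z => z.2 • z.1 :=
    Measure.ext fun A hA => (hM A hA).trans (temperedVal_eq_map_smul_prod R hA)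
  obtain ⟨C, hC, hbound⟩ := exists_lintegral_radialMeasure_le (E := Rd d) hp hα hα0
  refine ⟨hM' ▸ map_smul_prod_singleton_zero hR0 radialMeasure_singleton_zero, ?_⟩
  calc ∫⁻ x, ENNReal.ofReal (min (‖x‖ ^ (2 : ℝ)) 1) ∂M
      = ∫⁻ x, (∫⁻ t, ENNReal.ofReal (min (‖t • x‖ ^ (2 : ℝ)) 1) ∂radialMeasure p α) ∂ R := by
        rw [hM', lintegral_map_smul_prod _ _ (by fun_prop (disch := norm_num))]
    _ ≤ ∫⁻ x, C * ENNReal.ofReal (min (‖x‖ ^ (2 : ℝ)) (‖x‖ ^ max α 0)) ∂ R :=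
        lintegral_mono hbound
    _ = C * ∫⁻ x, ENNReal.ofReal (min (‖x‖ ^ (2 : ℝ)) (‖x‖ ^ max α 0)) ∂ R :=
        lintegral_const_mul' _ _ hC.ne
    _ < ⊤ := mul_lt_top hC hR
end
end

section
/- Fix η ∈ (0,2), p > 0, α ∈ (-∞,2)\{0} with γ = max(α,0) < η. Let M(A) = ∫_{S^{d-1}} ∫_0^∞ 1_A(ur) r^{-1-η} dr σ(du) be an η-stable Lévy measure, and set K_{η,α,p} = ∫_0^∞ t^{η-α-1} e^{-t^p} dt and R(dx) = K_{η,α,p}^{-1} M(dx). Then ∫_{ℝ^d} ∫_0^∞ 1_A(tx) t^{-1-α} e^{-t^p} dt R(dx) = M(A) for all Borel A; i.e., the η-stable Lévy measure is p-tempered α-stable with Rosiński measure R = K_{η,α,p}^{-1} M. -/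
open MeasureTheory ENNReal Filter Topology Set

noncomputable section

/-- The value `∫_{S^{d-1}} ∫_0^∞ 1_A(r u) r^{-1-η} dr σ(du)` defining an
`η`-stable Lévy measure with spectral measure `σ`. -/
def stableVal {d : ℕ} (η : ℝ) (σ : Measure (Metric.sphere (0 : Rd d) 1))
    (A : Set (Rd d)) : ℝ≥0∞ :=
  ∫⁻ u, (∫⁻ r in Set.Ioi (0 : ℝ),
    A.indicator (fun _ => (1 : ℝ≥0∞)) (r • (u : Rd d)) * ENNReal.ofReal (r ^ (-1 - η))
      ∂volume) ∂σ

/-! In polar coordinates `M` has radial density `r^{-1-η}`, which is homogeneous: substituting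
`r ↦ t r` shows `∫₀^∞ h(t r) r^{-1-η} dr = t^η ∫₀^∞ h(s) s^{-1-η} ds`. By Tonelli, integrating the
tempered kernel `1_A(t x) t^{-1-α} e^{-t^p}` against `M` therefore gives `M(A)` times
`∫₀^∞ t^{η-α-1} e^{-t^p} dt = K = Γ((η-α)/p)/p`, which is finite and positive because `α < η`. -/

lemma lintegral_Ioi_comp_mul_left {c : ℝ} (hc : 0 < c) (h : ℝ → ℝ≥0∞) :
    ∫⁻ r in Ioi 0, h (c * r) = ENNReal.ofReal c⁻¹ * ∫⁻ s in Ioi 0, h s := by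
  have hemb : MeasurableEmbedding (c * ·) := (Homeomorph.mulLeft₀ c hc.ne').measurableEmbedding
  have hpre : (c * ·) ⁻¹' Ioi (0 : ℝ) = Ioi 0 := by
    rw [preimage_const_mul_Ioi₀ _ hc, zero_div]
  have hmap : (volume.restrict (Ioi (0 : ℝ))).map (c * ·)
      = ENNReal.ofReal c⁻¹ • volume.restrict (Ioi 0) := by
    conv_lhs => rw [← hpre]
    rw [← hemb.restrict_map, Real.map_volume_mul_left hc.ne', Measure.restrict_smul, abs_inv,
      abs_of_pos hc]
  rw [← hemb.lintegral_map (μ := volume.restrict (Ioi 0)), hmap, lintegral_smul_measure,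
    smul_eq_mul]

lemma lintegral_Ioi_comp_mul_left_mul_rpow {t : ℝ} (ht : 0 < t) (η : ℝ) (h : ℝ → ℝ≥0∞) :
    ∫⁻ r in Ioi 0, h (t * r) * ENNReal.ofReal (r ^ (-1 - η))
      = ENNReal.ofReal (t ^ η) * ∫⁻ s in Ioi 0, h s * ENNReal.ofReal (s ^ (-1 - η)) := by
  have hweight : ∀ r ∈ Ioi (0 : ℝ), h (t * r) * ENNReal.ofReal (r ^ (-1 - η))
      = ENNReal.ofReal (t ^ (1 + η)) * (h (t * r) * ENNReal.ofReal ((t * r) ^ (-1 - η))) := by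
    intro r hr
    rw [mul_left_comm, ← ENNReal.ofReal_mul (by positivity), Real.mul_rpow ht.le hr.le,
      ← mul_assoc, ← Real.rpow_add ht, show 1 + η + (-1 - η) = 0 by ring, Real.rpow_zero, one_mul]
  rw [setLIntegral_congr_fun measurableSet_Ioi hweight, lintegral_const_mul' _ _ ofReal_ne_top,
    lintegral_Ioi_comp_mul_left ht fun s => h s * ENNReal.ofReal (s ^ (-1 - η)), ← mul_assoc,
    ← ENNReal.ofReal_mul (by positivity), Real.rpow_add ht, Real.rpow_one, mul_right_comm,
    mul_inv_cancel₀ ht.ne', one_mul]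

lemma lintegral_Ioi_lintegral_comp_mul_mul_rpow {h g : ℝ → ℝ≥0∞} (hh : Measurable h)
    (hg : Measurable g) (η : ℝ) :
    ∫⁻ r in Ioi 0, (∫⁻ t in Ioi 0, h (t * r) * g t) * ENNReal.ofReal (r ^ (-1 - η))
      = (∫⁻ t in Ioi 0, g t * ENNReal.ofReal (t ^ η))
          * ∫⁻ s in Ioi 0, h s * ENNReal.ofReal (s ^ (-1 - η)) := by
  set S := ∫⁻ s in Ioi 0, h s * ENNReal.ofReal (s ^ (-1 - η))
  calc ∫⁻ r in Ioi 0, (∫⁻ t in Ioi 0, h (t * r) * g t) * ENNReal.ofReal (r ^ (-1 - η))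
      = ∫⁻ r in Ioi 0, ∫⁻ t in Ioi 0, h (t * r) * ENNReal.ofReal (r ^ (-1 - η)) * g t := by
        refine lintegral_congr fun r => ?_
        rw [← lintegral_mul_const' _ _ ofReal_ne_top]
        exact lintegral_congr fun t => mul_right_comm _ _ _
    _ = ∫⁻ t in Ioi 0, ∫⁻ r in Ioi 0, h (t * r) * ENNReal.ofReal (r ^ (-1 - η)) * g t :=
        lintegral_lintegral_swap (by fun_prop)
    _ = ∫⁻ t in Ioi 0, g t * ENNReal.ofReal (t ^ η) * S := by
        refine setLIntegral_congr_fun measurableSet_Ioi fun t ht => ?_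
        rw [lintegral_mul_const _ (by fun_prop), lintegral_Ioi_comp_mul_left_mul_rpow ht]
        ring
    _ = (∫⁻ t in Ioi 0, g t * ENNReal.ofReal (t ^ η)) * S :=
        lintegral_mul_const _ (by fun_prop)

lemma integral_rpow_mul_exp_neg_rpow_pos {p q : ℝ} (hp : 0 < p) (hq : -1 < q) :
    0 < ∫ t in Ioi 0, t ^ q * Real.exp (-(t ^ p)) := by
  rw [integral_rpow_mul_exp_neg_rpow hp hq]
  exact mul_pos (by positivity) (Real.Gamma_pos_of_pos (div_pos (by linarith) hp))

lemma lintegral_Ioi_rpow_mul_exp_neg_rpow_mul_rpow {p α η : ℝ} (hp : 0 < p) (hαη : α < η) :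
    ∫⁻ t in Ioi 0, ENNReal.ofReal (t ^ (-1 - α) * Real.exp (-(t ^ p))) * ENNReal.ofReal (t ^ η)
      = ENNReal.ofReal (∫ t in Ioi 0, t ^ (η - α - 1) * Real.exp (-(t ^ p))) := by
  have hnonneg :
      0 ≤ᵐ[volume.restrict (Ioi 0)] fun t : ℝ => t ^ (η - α - 1) * Real.exp (-(t ^ p)) :=
    (ae_restrict_iff' measurableSet_Ioi).2 <| .of_forall fun t (ht : 0 < t) => by positivity
  rw [ofReal_integral_eq_lintegral_ofReal
    (integrableOn_rpow_mul_exp_neg_rpow (by linarith) hp) hnonneg]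
  refine setLIntegral_congr_fun measurableSet_Ioi fun t (ht : 0 < t) => ?_
  rw [← ENNReal.ofReal_mul (by positivity), mul_right_comm, ← Real.rpow_add ht]
  ring_nf

def stableMeasure {d : ℕ} (η : ℝ) (σ : Measure (Metric.sphere (0 : Rd d) 1)) : Measure (Rd d) :=
  (σ.prod ((volume.restrict (Ioi 0)).withDensity fun r => ENNReal.ofReal (r ^ (-1 - η)))).map
    fun q => q.2 • (q.1 : Rd d)

lemma lintegral_stableMeasure {d : ℕ} (η : ℝ) (σ : Measure (Metric.sphere (0 : Rd d) 1))
    {f : Rd d → ℝ≥0∞} (hf : Measurable f) :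
    ∫⁻ x, f x ∂stableMeasure η σ
      = ∫⁻ u, (∫⁻ r in Ioi 0, f (r • (u : Rd d)) * ENNReal.ofReal (r ^ (-1 - η))) ∂σ := by
  have hpolar : Measurable fun q : Metric.sphere (0 : Rd d) 1 × ℝ => q.2 • (q.1 : Rd d) := by
    fun_prop
  rw [stableMeasure, lintegral_map hf hpolar, lintegral_prod _ (by fun_prop)]
  refine lintegral_congr fun u => ?_
  rw [lintegral_withDensity_eq_lintegral_mul _ (by fun_prop) (by fun_prop)]
  exact lintegral_congr fun r => mul_comm _ _

lemma stableMeasure_apply {d : ℕ} (η : ℝ) (σ : Measure (Metric.sphere (0 : Rd d) 1))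
    {A : Set (Rd d)} (hA : MeasurableSet A) : stableMeasure η σ A = stableVal η σ A := by
  rw [← lintegral_indicator_one hA, lintegral_stableMeasure η σ (measurable_one.indicator hA)]
  rfl

theorem stmt14_general {d : ℕ} (p α η : ℝ) (hp : 0 < p) (hγη : max α 0 < η)
    (σ : Measure (Metric.sphere (0 : Rd d) 1)) (M : Measure (Rd d))
    (hM : ∀ A : Set (Rd d), MeasurableSet A → M A = stableVal η σ A)
    (K : ℝ) (hK : K = ∫ t in Set.Ioi (0 : ℝ), t ^ (η - α - 1) * Real.exp (-(t ^ p))) :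
    ∀ A : Set (Rd d), MeasurableSet A →
      temperedVal p α ((ENNReal.ofReal K)⁻¹ • M) A = M A := by
  intro A hA
  have hαη : α < η := (le_max_left α 0).trans_lt hγη
  have hK0 : ENNReal.ofReal K ≠ 0 :=
    (ofReal_pos.2 (hK ▸ integral_rpow_mul_exp_neg_rpow_pos hp (by linarith))).ne'
  have hMstable : M = stableMeasure η σ :=
    Measure.ext fun s hs => by rw [hM s hs, stableMeasure_apply η σ hs]
  set g : ℝ → ℝ≥0∞ := fun t => ENNReal.ofReal (t ^ (-1 - α) * Real.exp (-(t ^ p)))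
  have hradial : ∀ u : Metric.sphere (0 : Rd d) 1,
      ∫⁻ r in Ioi 0, (∫⁻ t in Ioi 0, A.indicator 1 (t • r • (u : Rd d)) * g t)
          * ENNReal.ofReal (r ^ (-1 - η))
        = ENNReal.ofReal K * ∫⁻ r in Ioi 0, A.indicator 1 (r • (u : Rd d))
          * ENNReal.ofReal (r ^ (-1 - η)) := by
    intro u
    simp_rw [smul_smul]
    rw [lintegral_Ioi_lintegral_comp_mul_mul_rpow (h := fun s => A.indicator 1 (s • (u : Rd d)))
      (by fun_prop) (by fun_prop), lintegral_Ioi_rpow_mul_exp_neg_rpow_mul_rpow hp hαη, hK]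
  calc temperedVal p α ((ENNReal.ofReal K)⁻¹ • M) A
      = (ENNReal.ofReal K)⁻¹ * ∫⁻ x, (∫⁻ t in Ioi 0, A.indicator 1 (t • x) * g t) ∂M := by
        rw [temperedVal, lintegral_smul_measure, smul_eq_mul]; rfl
    _ = (ENNReal.ofReal K)⁻¹ * (ENNReal.ofReal K * stableVal η σ A) := by
        rw [hMstable, lintegral_stableMeasure η σ (by fun_prop), lintegral_congr hradial,
          lintegral_const_mul' _ _ ofReal_ne_top]
        rfl
    _ = M A := by
        rw [← mul_assoc, ENNReal.inv_mul_cancel hK0 ofReal_ne_top, one_mul, hM A hA]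

theorem stmt14 {d : ℕ} (p α η : ℝ) (hp : 0 < p) (hα : α < 2) (hα0 : α ≠ 0)
    (hη : η ∈ Set.Ioo (0 : ℝ) 2) (hγη : max α 0 < η)
    (σ : Measure (Metric.sphere (0 : Rd d) 1)) [IsFiniteMeasure σ] (hσ : σ ≠ 0)
    (M : Measure (Rd d))
    (hM : ∀ A : Set (Rd d), MeasurableSet A → M A = stableVal η σ A)
    (K : ℝ) (hK : K = ∫ t in Set.Ioi (0 : ℝ), t ^ (η - α - 1) * Real.exp (-(t ^ p))) :
    ∀ A : Set (Rd d), MeasurableSet A →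
      temperedVal p α ((ENNReal.ofReal K)⁻¹ • M) A = M A :=
  stmt14_general p α η hp hγη σ M hM K hK
end
end
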